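/- Let V be a d-dimensional 𝔽₂-vector space with a fixed basis e₁, …, e_d, and let p ≥ 0. Then I_p(V) is contained in the 𝔽₂-linear span of the elements γ_U, where U ranges over all affine coordinate subspaces of V of dimension p with respect to this basis. -/

import Mathlib

open Finset

/-- The group algebra `𝔽₂[V]` of an additive group `V`. -/
abbrev GroupAlg (V : Type*) [AddCommGroup V] := AddMonoidAlgebra (ZMod 2) V

/-- The augmentation ideal `I₁(V)`: the kernel of the algebra map `𝔽₂[V] → 𝔽₂`
sending every basis element `T_v` to `1`. -/
noncomputable def augIdeal (V : Type*) [AddCommGroup V] : Ideal (GroupAlg V) :=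
  RingHom.ker (AddMonoidAlgebra.lift (ZMod 2) (ZMod 2) V 1)

/-- `γ_G = Σ_{v ∈ G} T_v` for a subset `G ⊆ V`. -/
noncomputable def gammaSet {V : Type*} [AddCommGroup V] [Fintype V] (G : Set V) :
    GroupAlg V :=
  ∑ v ∈ (Set.toFinite G).toFinset, AddMonoidAlgebra.single v (1 : ZMod 2)

/-! The `𝔽₂`-span `S_p` of the `γ_U` over `p`-dimensional affine coordinate subspaces `U` is an
ideal, since `T_v γ_U = γ_{v + U}`. For `U = w + W` we have `γ_U (T_{e_j} - 1) = γ_{e_j + U} - γ_U`,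
which vanishes if `e_j ∈ W` and is otherwise `γ_{U ∪ (e_j + U)}`, the `γ` of a `(p+1)`-dimensional
coordinate subspace; so `S_p · (T_{e_j} - 1) ⊆ S_{p+1}`. Finally `I₁(V)` is generated as an ideal by
the `T_{e_j} - 1`, because `T_{u+w} - 1 = T_u (T_w - 1) + (T_u - 1)`, and induction on `p` gives
`I_p(V) ⊆ S_p`. -/

open AddMonoidAlgebra Pointwise

section gammaSet

variable {V : Type*} [AddCommGroup V] [Fintype V]

lemma gammaSet_singleton (v : V) : gammaSet {v} = single v (1 : ZMod 2) := by
  simp [gammaSet]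

lemma gammaSet_union {G H : Set V} (h : Disjoint G H) :
    gammaSet (G ∪ H) = gammaSet G + gammaSet H := by
  classical
  rw [gammaSet, Set.Finite.toFinset_union (Set.toFinite G) (Set.toFinite H),
    Finset.sum_union (by simpa using h), gammaSet, gammaSet]

lemma single_one_mul_gammaSet (v : V) (G : Set V) :
    single v (1 : ZMod 2) * gammaSet G = gammaSet (v +ᵥ G) := by
  classical
  rw [gammaSet, gammaSet, ← Set.image_vadd, Set.Finite.toFinset_image _ (Set.toFinite G),
    Finset.sum_image (AddAction.injective v).injOn, Finset.mul_sum]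
  simp only [single_mul_single, one_mul, vadd_eq_add]

end gammaSet

section cosets

variable {V : Type*} [AddCommGroup V] [Module (ZMod 2) V]

lemma coe_span_singleton_sup_eq_union (u : V) (W : Submodule (ZMod 2) V) :
    (((ZMod 2 ∙ u) ⊔ W : Submodule (ZMod 2) V) : Set V) = (W : Set V) ∪ (u +ᵥ (W : Set V)) := by
  ext x
  simp only [SetLike.mem_coe, Submodule.mem_sup, Submodule.mem_span_singleton, Set.mem_union,
    Set.mem_vadd_set, vadd_eq_add]
  constructor
  · rintro ⟨_, ⟨c, rfl⟩, w, hw, rfl⟩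
    obtain rfl | rfl := (by decide : ∀ c : ZMod 2, c = 0 ∨ c = 1) c
    · left; simpa using hw
    · right; exact ⟨w, hw, by simp⟩
  · rintro (hx | ⟨w, hw, rfl⟩)
    · exact ⟨0, ⟨0, zero_smul _ _⟩, x, hx, zero_add x⟩
    · exact ⟨u, ⟨1, one_smul _ _⟩, w, hw, rfl⟩

lemma disjoint_coe_vadd_of_notMem {u : V} {W : Submodule (ZMod 2) V} (hu : u ∉ W) :
    Disjoint (W : Set V) (u +ᵥ (W : Set V)) := by
  rw [Set.disjoint_left]
  rintro _ hx ⟨w, hw, rfl⟩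
  exact hu (by simpa using W.sub_mem hx hw)

end cosets

section augmentation

variable {V : Type*} [AddCommGroup V]

lemma augIdeal_le_of_forall_single_sub_one_mem {J : Ideal (GroupAlg V)}
    (hJ : ∀ v, single v (1 : ZMod 2) - 1 ∈ J) : augIdeal V ≤ J := by
  have key (x : GroupAlg V) :
      x - algebraMap (ZMod 2) _ (AddMonoidAlgebra.lift (ZMod 2) (ZMod 2) V 1 x) ∈ J := by
    induction x using AddMonoidAlgebra.induction_linear with
    | zero => simp
    | add a b ha hb => simpa [add_sub_add_comm] using J.add_mem ha hb
    | single v c =>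
      have : single v c - algebraMap (ZMod 2) (GroupAlg V) c = c • (single v 1 - 1) := by
        rw [smul_sub, smul_single', mul_one, Algebra.algebraMap_eq_smul_one]
      rw [lift_single, MonoidHom.one_apply, smul_eq_mul, mul_one, this]
      exact J.smul_of_tower_mem c (hJ v)
  intro x hx
  simpa [(RingHom.mem_ker).1 hx] using key x

lemma single_sub_one_mem_of_basis [Module (ZMod 2) V] {ι : Type*} (b : Module.Basis ι (ZMod 2) V)
    {J : Ideal (GroupAlg V)} (hJ : ∀ i, single (b i) (1 : ZMod 2) - 1 ∈ J) (v : V) :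
    single v (1 : ZMod 2) - 1 ∈ J := by
  induction (b.span_eq ▸ Submodule.mem_top : v ∈ Submodule.span (ZMod 2) (Set.range b))
    using Submodule.span_induction with
  | mem _ hx =>
    obtain ⟨i, rfl⟩ := hx
    exact hJ i
  | zero => simp [← one_def]
  | add u w _ _ hu hw =>
    have : single (u + w) (1 : ZMod 2) - 1 = single u 1 * (single w 1 - 1) + (single u 1 - 1) := by
      rw [mul_sub, single_mul_single, mul_one, mul_one]; abel
    rw [this]
    exact J.add_mem (J.mul_mem_left _ hw) hu
  | smul c u _ hu =>
    obtain rfl | rfl := (by decide : ∀ c : ZMod 2, c = 0 ∨ c = 1) c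
    · simp [← one_def]
    · rwa [one_smul]

lemma augIdeal_le_span_single_basis_sub_one [Module (ZMod 2) V] {ι : Type*}
    (b : Module.Basis ι (ZMod 2) V) :
    augIdeal V ≤ Ideal.span (Set.range fun i ↦ single (b i) (1 : ZMod 2) - 1) :=
  augIdeal_le_of_forall_single_sub_one_mem <|
    single_sub_one_mem_of_basis b fun i ↦ Ideal.subset_span ⟨i, rfl⟩

end augmentation

section coordinate

open Submodule

variable {V : Type*} [AddCommGroup V] [Module (ZMod 2) V] [Fintype V]
  {d : ℕ} (e : Module.Basis (Fin d) (ZMod 2) V)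

def coordGammas (p : ℕ) : Set (GroupAlg V) :=
  {x | ∃ (v : V) (s : Finset (Fin d)), s.card = p ∧
    x = gammaSet (v +ᵥ (span (ZMod 2) (e '' (s : Set (Fin d))) : Set V))}

lemma single_one_mul_mem_span_coordGammas {p : ℕ} (v : V) {x : GroupAlg V}
    (hx : x ∈ span (ZMod 2) (coordGammas e p)) :
    single v (1 : ZMod 2) * x ∈ span (ZMod 2) (coordGammas e p) := by
  suffices h : span (ZMod 2) (coordGammas e p) ≤
      (span (ZMod 2) (coordGammas e p)).comap (LinearMap.mulLeft (ZMod 2) (single v 1)) from h hx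
  rw [span_le]
  rintro _ ⟨w, s, hs, rfl⟩
  exact subset_span ⟨v + w, s, hs, by
    rw [LinearMap.mulLeft_apply, single_one_mul_gammaSet, vadd_vadd]⟩

lemma mul_mem_span_coordGammas {p : ℕ} (a : GroupAlg V) {x : GroupAlg V}
    (hx : x ∈ span (ZMod 2) (coordGammas e p)) : a * x ∈ span (ZMod 2) (coordGammas e p) := by
  induction a using AddMonoidAlgebra.induction_linear with
  | zero => simp
  | add a b ha hb => rw [add_mul]; exact add_mem ha hb
  | single v c =>
    rw [← mul_one c, ← smul_single', smul_mul_assoc]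
    exact smul_mem _ c (single_one_mul_mem_span_coordGammas e v hx)

noncomputable def coordIdeal (p : ℕ) : Ideal (GroupAlg V) where
  toAddSubmonoid := (span (ZMod 2) (coordGammas e p)).toAddSubmonoid
  smul_mem' a _ hx := mul_mem_span_coordGammas e a hx

lemma coordIdeal_zero : coordIdeal e 0 = ⊤ := by
  refine (Ideal.eq_top_iff_one _).2 (subset_span ⟨0, ∅, rfl, ?_⟩)
  simp [← gammaSet_singleton, one_def]

lemma gammaSet_vadd_mul_single_sub_one_mem {p : ℕ} {s : Finset (Fin d)} (hs : s.card = p)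
    (w : V) (j : Fin d) :
    gammaSet (w +ᵥ (span (ZMod 2) (e '' (s : Set (Fin d))) : Set V)) * (single (e j) 1 - 1) ∈
      span (ZMod 2) (coordGammas e (p + 1)) := by
  set W := span (ZMod 2) (e '' (s : Set (Fin d)))
  have : CharP (GroupAlg V) 2 := charP_of_injective_algebraMap' (ZMod 2) 2
  rw [mul_sub, mul_one, mul_comm, single_one_mul_gammaSet, vadd_comm]
  by_cases hj : j ∈ s
  · have hW : e j +ᵥ (W : Set V) = W :=
      leftAddCoset_mem_leftAddCoset W.toAddSubgroup (subset_span (Set.mem_image_of_mem e hj))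
    rw [hW, sub_self]
    exact zero_mem _
  · have hej : e j ∉ W := e.linearIndependent.notMem_span_image (by simpa using hj)
    rw [CharTwo.sub_eq_add, ← gammaSet_union
      (Set.disjoint_vadd_set.2 (disjoint_coe_vadd_of_notMem hej).symm), ← Set.vadd_set_union,
      Set.union_comm, ← coe_span_singleton_sup_eq_union]
    refine subset_span ⟨w, insert j s, by rw [Finset.card_insert_of_notMem hj, hs], ?_⟩
    rw [Finset.coe_insert, Set.image_insert_eq, span_insert]

lemma mul_single_sub_one_mem_coordIdeal {p : ℕ} {x : GroupAlg V} (hx : x ∈ coordIdeal e p)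
    (j : Fin d) : x * (single (e j) 1 - 1) ∈ coordIdeal e (p + 1) := by
  suffices h : span (ZMod 2) (coordGammas e p) ≤
      (span (ZMod 2) (coordGammas e (p + 1))).comap
        (LinearMap.mulRight (ZMod 2) (single (e j) 1 - 1)) from h hx
  rw [span_le]
  rintro _ ⟨w, s, hs, rfl⟩
  exact gammaSet_vadd_mul_single_sub_one_mem e hs w j

lemma coordIdeal_mul_augIdeal_le (p : ℕ) : coordIdeal e p * augIdeal V ≤ coordIdeal e (p + 1) := by
  refine (Ideal.mul_mono_right (augIdeal_le_span_single_basis_sub_one e)).trans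
    (Ideal.mul_le.2 fun x hx y hy ↦ ?_)
  obtain ⟨c, rfl⟩ := Ideal.mem_span_range_iff_exists_fun.1 hy
  rw [Finset.mul_sum]
  refine sum_mem fun j _ ↦ ?_
  rw [mul_left_comm]
  exact Ideal.mul_mem_left _ _ (mul_single_sub_one_mem_coordIdeal e hx j)

end coordinate

/-- Given a basis `e₁, …, e_d` of `V`, the piece `I_p(V)` of the Quillen filtration
is contained in the `𝔽₂`-linear span of the `γ_U`'s where `U` ranges over the
`p`-dimensional affine coordinate subspaces `U = v + span{e_i : i ∈ s}`, `|s| = p`. -/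
theorem quillen_contained_in_coordinate_span
    (d p : ℕ)
    (V : Type*) [AddCommGroup V] [Module (ZMod 2) V] [Fintype V]
    (e : Module.Basis (Fin d) (ZMod 2) V) :
    ((augIdeal V ^ p : Ideal (GroupAlg V)) : Set (GroupAlg V)) ⊆
      (Submodule.span (ZMod 2)
        {x : GroupAlg V | ∃ (v : V) (s : Finset (Fin d)), s.card = p ∧
          x = gammaSet ((v + ·) ''
            ((Submodule.span (ZMod 2) (e '' (s : Set (Fin d)))) : Set V))} :
        Submodule (ZMod 2) (GroupAlg V)) := by
  suffices h : augIdeal V ^ p ≤ coordIdeal e p from fun x hx ↦ h hx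
  induction p with
  | zero => rw [pow_zero, Ideal.one_eq_top, coordIdeal_zero]
  | succ p ih =>
    rw [pow_succ]
    exact (Ideal.mul_mono_left ih).trans (coordIdeal_mul_augIdeal_le e p)
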